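/- arXiv:1010.1784 — 3 statements merged into one kernel-verified Lean document; each statement's English description precedes it below -/
import Mathlib

section
/- For integers n ≥ 3 and m ≥ 2, the metric dimension of the graph (Pₙ × Pₘ) ⊙ K₁ equals 3. -/
/-!
Distances in the grid `Pₙ □ Pₘ` are ℓ¹ distances of coordinates. Writing `v'` for the pendant
vertex at `v`, the corona adds one per pendant endpoint: `d(u, v') = d(u, v) + 1`, and
`d(u', v') = d(u, v) + 2` for `u ≠ v`.

Upper bound: the pendants at the corners `(0, 0)`, `(n - 1, 0)`, `(0, m - 1)` resolve the corona,
because these corners resolve the grid and no grid vertex is exactly one step farther than another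
from all three of them.

Lower bound: for two vertices of the corona with base vertices `p, q`, either two grid vertices
have equal distances to `p` and to `q`, or some `v ∉ {p, q}` has a neighbour `u` one step farther
from both; in the second case `u` and `v'` are not distinguished. A case analysis on the positions
of `p` and `q` shows that one of the two always happens once `n ≥ 3` and `m ≥ 2`.
-/

open SimpleGraph

/-- Corona `G ⊙ K₁`: attach to each vertex `v` (as `Sum.inl v`) a pendant vertex `Sum.inr v`. -/
def corona {V : Type*} (G : SimpleGraph V) : SimpleGraph (V ⊕ V) :=
  SimpleGraph.fromRel (fun a b =>
    match a, b with
    | Sum.inl x, Sum.inl y => G.Adj x y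
    | Sum.inl x, Sum.inr y => x = y
    | _, _ => False)

/-- `S` is a resolving set for `G`: distinct vertices have distinct distance vectors to `S`. -/
def IsResolving {V : Type*} (G : SimpleGraph V) (S : Set V) : Prop :=
  ∀ u v : V, (∀ s ∈ S, G.dist u s = G.dist v s) → u = v

/-- Metric dimension: minimum cardinality of a resolving set. -/
noncomputable def metricDim {V : Type*} [Fintype V] (G : SimpleGraph V) : ℕ :=
  sInf {k | ∃ S : Finset V, S.card = k ∧ IsResolving G (↑S : Set V)}

namespace SimpleGraph

lemma edist_map_le_of_adj_or_eq {V W : Type*} {G : SimpleGraph V} {H : SimpleGraph W}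
    (f : V → W) (hf : ∀ x y, G.Adj x y → H.Adj (f x) (f y) ∨ f x = f y) (u v : V) :
    H.edist (f u) (f v) ≤ G.edist u v := by
  by_cases huv : G.edist u v = ⊤
  · simp [huv]
  obtain ⟨w, hw⟩ := exists_walk_of_edist_ne_top huv
  rw [← hw]
  clear hw huv
  induction w with
  | nil => simp
  | @cons x y z hxy _ ih =>
    calc H.edist (f x) (f z) ≤ H.edist (f x) (f y) + H.edist (f y) (f z) := H.edist_triangle
      _ ≤ 1 + _ := add_le_add (edist_le_one_iff_adj_or_eq.mpr (hf x y hxy)) ih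
      _ = _ := by rw [Walk.length_cons, add_comm]; push_cast; rfl

lemma dist_boxProd_of_reachable {α β : Type*} {G : SimpleGraph α} {H : SimpleGraph β}
    {x y : α × β} (h₁ : G.Reachable x.1 y.1) (h₂ : H.Reachable x.2 y.2) :
    (G □ H).dist x y = G.dist x.1 y.1 + H.dist x.2 y.2 := by
  have hr : (G □ H).Reachable x y := reachable_boxProd.mpr ⟨h₁, h₂⟩
  have := edist_boxProd (G := G) (H := H) x y
  rw [← hr.coe_dist_eq_edist, ← h₁.coe_dist_eq_edist, ← h₂.coe_dist_eq_edist] at this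
  exact_mod_cast this

lemma pathGraph_dist_le_length {n : ℕ} {u v : Fin n} (w : (pathGraph n).Walk u v) :
    Nat.dist u v ≤ w.length := by
  induction w with
  | nil => simp
  | cons h _ ih =>
    rw [pathGraph_adj] at h
    simp only [Nat.dist, Walk.length_cons] at ih ⊢
    omega

lemma pathGraph_dist {n : ℕ} (u v : Fin n) : (pathGraph n).dist u v = Nat.dist u v := by
  refine le_antisymm ?_ ?_
  · wlog huv : u ≤ v generalizing u v
    · rw [dist_comm, Nat.dist_comm]
      exact this v u (le_of_not_ge huv)
    obtain ⟨k, hk⟩ := Nat.exists_eq_add_of_le (Fin.le_def.mp huv)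
    induction k generalizing v with
    | zero => simp [Fin.ext (by omega : (v : ℕ) = u)]
    | succ k ih =>
      let v' : Fin n := ⟨u + k, by omega⟩
      have hadj : (pathGraph n).Adj v' v := pathGraph_adj.mpr (Or.inl (by simp [v']; omega))
      calc (pathGraph n).dist u v ≤ (pathGraph n).dist u v' + (pathGraph n).dist v' v :=
            hadj.reachable.dist_triangle_right u
        _ ≤ Nat.dist u v' + 1 := by
            rw [dist_eq_one_iff_adj.mpr hadj]
            exact Nat.add_le_add_right (ih v' (Fin.le_def.mpr (by simp [v'])) rfl) 1
        _ = Nat.dist u v := by simp only [Nat.dist, v']; omega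
  · obtain ⟨w, hw⟩ := (pathGraph_preconnected n u v).exists_walk_length_eq_dist
    exact hw ▸ pathGraph_dist_le_length w

lemma pathGraph_connected_of_pos {n : ℕ} (hn : 0 < n) : (pathGraph n).Connected := by
  obtain ⟨k, rfl⟩ : ∃ k, n = k + 1 := ⟨n - 1, by omega⟩
  exact pathGraph_connected k

end SimpleGraph

section Resolving

variable {V : Type*} {G : SimpleGraph V}

lemma IsResolving.mono {S T : Set V} (hST : S ⊆ T) (hS : IsResolving G S) : IsResolving G T :=
  fun u v h => hS u v fun s hs => h s (hST hs)

lemma not_isResolving_pair_iff {s t : V} :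
    ¬ IsResolving G {s, t} ↔
      ∃ u v, u ≠ v ∧ G.dist u s = G.dist v s ∧ G.dist u t = G.dist v t := by
  simp only [IsResolving, Set.mem_insert_iff, Set.mem_singleton_iff, forall_eq_or_imp,
    forall_eq, not_forall, exists_prop]
  grind

lemma three_le_card_of_isResolving [Nonempty V] (h : ∀ s t : V, ¬ IsResolving G {s, t})
    {S : Finset V} (hS : IsResolving G S) : 3 ≤ S.card := by
  classical
  by_contra! hcard
  obtain ⟨s, t, hst⟩ : ∃ s t : V, S ⊆ {s, t} := by
    rcases Nat.lt_succ_iff_lt_or_eq.mp hcard with hle | htwo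
    · obtain ⟨s, hs⟩ := Finset.card_le_one_iff_subset_singleton.mp (Nat.lt_succ_iff.mp hle)
      exact ⟨s, s, by simpa using hs⟩
    · obtain ⟨s, t, -, rfl⟩ := Finset.card_eq_two.mp htwo
      exact ⟨s, t, subset_rfl⟩
  exact h s t (hS.mono fun x hx => by simpa using hst hx)

lemma metricDim_eq_of_isResolving [Fintype V] {k : ℕ}
    (hex : ∃ S : Finset V, S.card = k ∧ IsResolving G S)
    (hmin : ∀ S : Finset V, IsResolving G S → k ≤ S.card) : metricDim G = k :=
  le_antisymm (Nat.sInf_le hex) <| by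
    obtain ⟨S, hcard, hS⟩ : metricDim G ∈ _ := Nat.sInf_mem ⟨k, hex⟩
    exact hcard ▸ hmin S hS

end Resolving

section Corona

variable {V : Type*} {G : SimpleGraph V}

@[simp] lemma corona_adj_inl_inl {x y : V} :
    (corona G).Adj (.inl x) (.inl y) ↔ G.Adj x y := by
  simp only [corona, fromRel_adj, ne_eq, Sum.inl.injEq]
  exact ⟨fun h => h.2.elim id (·.symm), fun h => ⟨G.ne_of_adj h, .inl h⟩⟩

@[simp] lemma corona_adj_inl_inr {x y : V} : (corona G).Adj (.inl x) (.inr y) ↔ x = y := by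
  simp [corona]

@[simp] lemma corona_adj_inr_inl {x y : V} : (corona G).Adj (.inr x) (.inl y) ↔ y = x := by
  simp [corona]

@[simp] lemma not_corona_adj_inr_inr {x y : V} : ¬ (corona G).Adj (.inr x) (.inr y) := by
  simp [corona]

lemma corona_edist_inl_inl (u v : V) :
    (corona G).edist (.inl u) (.inl v) = G.edist u v := by
  refine le_antisymm (edist_map_le_of_adj_or_eq Sum.inl (fun x y h => .inl (by simpa)) u v) ?_
  exact edist_map_le_of_adj_or_eq (Sum.elim id id) (by rintro (x | x) (y | y) h <;> simp_all) _ _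

lemma corona_dist_inl_inl (u v : V) : (corona G).dist (.inl u) (.inl v) = G.dist u v :=
  congrArg ENat.toNat (corona_edist_inl_inl u v)

lemma corona_edist_inr_left {p : V} {a : V ⊕ V} (h : a ≠ .inr p) :
    (corona G).edist (.inr p) a = (corona G).edist (.inl p) a + 1 := by
  refine le_antisymm ?_ ?_
  · calc _ ≤ (corona G).edist (.inr p) (.inl p) + (corona G).edist (.inl p) a :=
          SimpleGraph.edist_triangle
      _ = _ := by rw [edist_eq_one_iff_adj.mpr (corona_adj_inr_inl.mpr rfl), add_comm]
  by_cases htop : (corona G).edist (.inr p) a = ⊤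
  · exact htop ▸ le_top
  obtain ⟨w, hw⟩ := exists_walk_of_edist_ne_top htop
  rw [← hw]
  cases w with
  | nil => exact absurd rfl h
  | @cons _ x _ hx q =>
    -- the only neighbour of a pendant vertex is its base vertex
    obtain rfl : x = .inl p := by
      cases x with
      | inl y => exact congrArg _ (corona_adj_inr_inl.mp hx)
      | inr y => exact absurd hx not_corona_adj_inr_inr
    rw [Walk.length_cons, Nat.cast_succ]
    exact add_le_add_left (edist_le q) 1

lemma corona_connected (hG : G.Connected) : (corona G).Connected := by
  have : Nonempty (V ⊕ V) := ⟨.inl hG.nonempty.some⟩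
  have hinl : ∀ u v : V, (corona G).Reachable (.inl u) (.inl v) := fun u v => by
    rw [← edist_ne_top_iff_reachable, corona_edist_inl_inl, edist_ne_top_iff_reachable]
    exact hG.preconnected u v
  have hbase : ∀ a : V ⊕ V, ∃ u, (corona G).Reachable a (.inl u)
    | .inl u => ⟨u, .rfl⟩
    | .inr u => ⟨u, (Adj.reachable (by simp)).symm⟩
  refine ⟨fun a b => ?_⟩
  obtain ⟨u, hu⟩ := hbase a
  obtain ⟨v, hv⟩ := hbase b
  exact hu.trans ((hinl u v).trans hv.symm)

lemma corona_dist_inr (hG : G.Connected) {a : V ⊕ V} {p : V} (h : a ≠ .inr p) :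
    (corona G).dist a (.inr p) = (corona G).dist a (.inl p) + 1 := by
  have hc := corona_connected hG
  have he := corona_edist_inr_left (G := G) h
  rw [SimpleGraph.edist_comm, SimpleGraph.edist_comm (u := Sum.inl p)] at he
  rw [← (hc.preconnected _ _).coe_dist_eq_edist, ← (hc.preconnected _ _).coe_dist_eq_edist] at he
  exact_mod_cast he

lemma corona_dist_inl_inr (hG : G.Connected) (u v : V) :
    (corona G).dist (.inl u) (.inr v) = G.dist u v + 1 := by
  rw [corona_dist_inr hG (by simp), corona_dist_inl_inl]

lemma corona_dist_inr_inr (hG : G.Connected) {u v : V} (huv : u ≠ v) :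
    (corona G).dist (.inr u) (.inr v) = G.dist u v + 2 := by
  rw [corona_dist_inr hG (by simpa), dist_comm, corona_dist_inl_inr hG, dist_comm]

end Corona

section CoronaResolving

variable {V : Type*} {G : SimpleGraph V}

lemma isResolving_corona_image_inr (hG : G.Connected) {S : Set V} (hS : IsResolving G S)
    (hshift : ∀ x y, ∃ s ∈ S, G.dist x s ≠ G.dist y s + 1) :
    IsResolving (corona G) (Sum.inr '' S) := by
  have hc := corona_connected hG
  have mixed : ∀ x y, ¬ ∀ s ∈ S,
      (corona G).dist (.inl x) (.inr s) = (corona G).dist (.inr y) (.inr s) := by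
    intro x y h
    obtain ⟨s, hs, hne⟩ := hshift x y
    have hxs := h s hs
    rw [corona_dist_inl_inr hG] at hxs
    by_cases hys : y = s
    · simp [hys] at hxs
    · rw [corona_dist_inr_inr hG hys] at hxs
      omega
  rintro (x | x) (y | y) h <;> simp only [Set.forall_mem_image] at h
  · exact congrArg _ (hS x y fun s hs => by simpa [corona_dist_inl_inr hG] using h hs)
  · exact (mixed x y h).elim
  · exact (mixed y x fun s hs => (h hs).symm).elim
  · have hiff : ∀ s ∈ S, x = s ↔ y = s := fun s hs => by
      simpa [hc.dist_eq_zero_iff] using Iff.of_eq (congrArg (· = 0) (h hs))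
    by_cases hxS : x ∈ S
    · exact congrArg _ ((hiff x hxS).mp rfl).symm
    refine congrArg _ (hS x y fun s hs => ?_)
    have hxs : x ≠ s := fun e => hxS (e ▸ hs)
    have hys : y ≠ s := fun e => hxs ((hiff s hs).mpr e)
    simpa [corona_dist_inr_inr hG hxs, corona_dist_inr_inr hG hys] using h hs

lemma corona_dist_inl_eq_inl (hG : G.Connected) {u v : V} {w : V ⊕ V}
    (h : G.dist u (Sum.elim id id w) = G.dist v (Sum.elim id id w)) :
    (corona G).dist (.inl u) w = (corona G).dist (.inl v) w := by
  rcases w with p | p <;> simp_all [corona_dist_inl_inl, corona_dist_inl_inr hG]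

lemma corona_dist_inl_eq_inr (hG : G.Connected) {u v : V} {w : V ⊕ V}
    (hv : v ≠ Sum.elim id id w)
    (h : G.dist u (Sum.elim id id w) = G.dist v (Sum.elim id id w) + 1) :
    (corona G).dist (.inl u) w = (corona G).dist (.inr v) w := by
  rcases w with p | p <;> simp only [Sum.elim_inl, Sum.elim_inr, id] at hv h
  · rw [corona_dist_inl_inl, dist_comm (u := Sum.inr v), corona_dist_inl_inr hG, h,
      SimpleGraph.dist_comm (u := v)]
  · rw [corona_dist_inl_inr hG, corona_dist_inr_inr hG hv, h]

lemma corona_not_isResolving_pair (hG : G.Connected)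
    (h : ∀ p q : V, ¬ IsResolving G {p, q} ∨
      ∃ u v, v ≠ p ∧ v ≠ q ∧ G.dist u p = G.dist v p + 1 ∧ G.dist u q = G.dist v q + 1)
    (s t : V ⊕ V) : ¬ IsResolving (corona G) {s, t} := by
  rw [not_isResolving_pair_iff]
  rcases h (Sum.elim id id s) (Sum.elim id id t) with h | ⟨u, v, hvs, hvt, hs, ht⟩
  · obtain ⟨u, v, huv, hs, ht⟩ := not_isResolving_pair_iff.mp h
    exact ⟨.inl u, .inl v, by simpa, corona_dist_inl_eq_inl hG hs, corona_dist_inl_eq_inl hG ht⟩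
  · exact ⟨.inl u, .inr v, Sum.inl_ne_inr, corona_dist_inl_eq_inr hG hvs hs,
      corona_dist_inl_eq_inr hG hvt ht⟩

end CoronaResolving

section Grid

variable {n m : ℕ}

lemma grid_dist (a b : Fin n × Fin m) :
    (pathGraph n □ pathGraph m).dist a b = Nat.dist a.1 b.1 + Nat.dist a.2 b.2 := by
  rw [dist_boxProd_of_reachable (pathGraph_preconnected n _ _) (pathGraph_preconnected m _ _),
    pathGraph_dist, pathGraph_dist]

lemma grid_connected (hn : 0 < n) (hm : 0 < m) : (pathGraph n □ pathGraph m).Connected :=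
  (pathGraph_connected_of_pos hn).boxProd (pathGraph_connected_of_pos hm)

-- With corners `A, B, C`: `d(x, A) + d(x, B) = n - 1 + 2 x₂` and `d(x, A) + d(x, C) = m - 1 + 2 x₁`
-- recover `x`, and a shift by one of all three distances would shift `d(x, A)` by two.
lemma exists_grid_corners (hn : 2 ≤ n) (hm : 2 ≤ m) :
    ∃ S : Finset (Fin n × Fin m), S.card = 3 ∧ IsResolving (pathGraph n □ pathGraph m) S ∧
      ∀ x y, ∃ s ∈ S,
        (pathGraph n □ pathGraph m).dist x s ≠ (pathGraph n □ pathGraph m).dist y s + 1 := by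
  refine ⟨{(⟨0, by omega⟩, ⟨0, by omega⟩), (⟨n - 1, by omega⟩, ⟨0, by omega⟩),
    (⟨0, by omega⟩, ⟨m - 1, by omega⟩)}, ?_, fun x y h => ?_, fun x y => ?_⟩
  · rw [Finset.card_eq_three]
    refine ⟨_, _, _, ?_, ?_, ?_, rfl⟩ <;> simp only [ne_eq, Prod.ext_iff, Fin.ext_iff] <;> omega
  · simp only [Finset.coe_insert, Finset.coe_singleton, Set.mem_insert_iff,
      Set.mem_singleton_iff, forall_eq_or_imp, forall_eq, grid_dist, Nat.dist, Nat.sub_zero,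
      Nat.zero_sub, add_zero] at h
    ext <;> omega
  · by_contra! h
    simp only [Finset.mem_insert, Finset.mem_singleton, forall_eq_or_imp, forall_eq, grid_dist,
      Nat.dist, Nat.sub_zero, Nat.zero_sub, add_zero] at h
    omega

lemma exists_lt_ne_ne (hn : 3 ≤ n) (a c : ℕ) : ∃ x < n, x ≠ a ∧ x ≠ c := by
  by_cases h0 : a ≠ 0 ∧ c ≠ 0
  · exact ⟨0, by omega, by omega, by omega⟩
  by_cases h1 : a ≠ 1 ∧ c ≠ 1
  · exact ⟨1, by omega, by omega, by omega⟩
  exact ⟨2, by omega, by omega, by omega⟩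

-- Moving along a column that avoids `p` and `q`, away from both of their rows.
lemma exists_grid_step_of_rows (hn : 3 ≤ n) (p q : Fin n × Fin m)
    (hpq : ¬ ((p.2 : ℕ) = 0 ∧ (q.2 : ℕ) = m - 1)) (hqp : ¬ ((q.2 : ℕ) = 0 ∧ (p.2 : ℕ) = m - 1)) :
    ∃ u v, v ≠ p ∧ v ≠ q ∧
      (pathGraph n □ pathGraph m).dist u p = (pathGraph n □ pathGraph m).dist v p + 1 ∧
      (pathGraph n □ pathGraph m).dist u q = (pathGraph n □ pathGraph m).dist v q + 1 := by
  obtain ⟨⟨a, ha⟩, ⟨b, hb⟩⟩ := p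
  obtain ⟨⟨c, hc⟩, ⟨d, hd⟩⟩ := q
  dsimp only at hpq hqp
  simp only [Prod.exists, Fin.exists_iff, ne_eq, Prod.mk.injEq, Fin.mk.injEq, grid_dist, Nat.dist]
  obtain ⟨x, hx, hxa, hxc⟩ := exists_lt_ne_ne hn a c
  by_cases hmax : max b d + 1 < m
  · exact ⟨x, hx, max b d + 1, hmax, x, hx, max b d, by omega, by omega⟩
  · exact ⟨x, hx, min b d - 1, by omega, x, hx, min b d, by omega, by omega⟩

lemma grid_twins_or_step_of_opposite_rows (hn : 3 ≤ n) (hm : 2 ≤ m) (p q : Fin n × Fin m)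
    (hp : (p.2 : ℕ) = 0) (hq : (q.2 : ℕ) = m - 1) :
    ¬ IsResolving (pathGraph n □ pathGraph m) {p, q} ∨ ∃ u v, v ≠ p ∧ v ≠ q ∧
      (pathGraph n □ pathGraph m).dist u p = (pathGraph n □ pathGraph m).dist v p + 1 ∧
      (pathGraph n □ pathGraph m).dist u q = (pathGraph n □ pathGraph m).dist v q + 1 := by
  obtain ⟨⟨a, ha⟩, ⟨b, hb⟩⟩ := p
  obtain ⟨⟨c, hc⟩, ⟨d, hd⟩⟩ := q
  dsimp only at hp hq
  simp only [not_isResolving_pair_iff, Prod.exists, Fin.exists_iff, ne_eq, Prod.mk.injEq,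
    Fin.mk.injEq, grid_dist, Nat.dist]
  rcases lt_trichotomy a c with hac | rfl | hac
  · by_cases hc' : c + 1 < n
    · exact .inr ⟨c + 1, hc', 0, by omega, c, hc, 0, by omega, by omega⟩
    by_cases ha' : 1 ≤ a
    · exact .inr ⟨a - 1, by omega, m - 1, by omega, a, ha, m - 1, by omega, by omega⟩
    -- `p` and `q` are opposite corners
    · exact .inl ⟨1, by omega, 0, by omega, 0, by omega, 1, by omega, by omega⟩
  · by_cases h0 : a = 0
    · exact .inr ⟨2, hn, 0, by omega, 1, by omega, 0, by omega, by omega⟩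
    by_cases h1 : a = n - 1
    · exact .inr ⟨n - 3, by omega, 0, by omega, n - 2, by omega, 0, by omega, by omega⟩
    · exact .inl ⟨a - 1, by omega, 0, by omega, a + 1, by omega, 0, by omega, by omega⟩
  · by_cases ha' : a + 1 < n
    · exact .inr ⟨a + 1, ha', m - 1, by omega, a, ha, m - 1, by omega, by omega⟩
    by_cases hc' : 1 ≤ c
    · exact .inr ⟨c - 1, by omega, 0, by omega, c, hc, 0, by omega, by omega⟩
    · exact .inl ⟨n - 2, by omega, 0, by omega, n - 1, by omega, 1, by omega, by omega⟩

lemma grid_twins_or_step (hn : 3 ≤ n) (hm : 2 ≤ m) (p q : Fin n × Fin m) :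
    ¬ IsResolving (pathGraph n □ pathGraph m) {p, q} ∨ ∃ u v, v ≠ p ∧ v ≠ q ∧
      (pathGraph n □ pathGraph m).dist u p = (pathGraph n □ pathGraph m).dist v p + 1 ∧
      (pathGraph n □ pathGraph m).dist u q = (pathGraph n □ pathGraph m).dist v q + 1 := by
  by_cases hpq : (p.2 : ℕ) = 0 ∧ (q.2 : ℕ) = m - 1
  · exact grid_twins_or_step_of_opposite_rows hn hm p q hpq.1 hpq.2
  by_cases hqp : (q.2 : ℕ) = 0 ∧ (p.2 : ℕ) = m - 1
  · rw [Set.pair_comm]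
    rcases grid_twins_or_step_of_opposite_rows hn hm q p hqp.1 hqp.2 with
      h | ⟨u, v, hvq, hvp, hq, hp⟩
    · exact .inl h
    · exact .inr ⟨u, v, hvp, hvq, hp, hq⟩
  exact .inr (exists_grid_step_of_rows hn p q hpq hqp)

end Grid

theorem stmt_0 (n m : ℕ) (hn : 3 ≤ n) (hm : 2 ≤ m) :
    metricDim (corona (pathGraph n □ pathGraph m)) = 3 := by
  have hG := grid_connected (n := n) (m := m) (by omega) (by omega)
  obtain ⟨S, hcard, hres, hshift⟩ := exists_grid_corners (n := n) (by omega) hm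
  have : Nonempty (Fin n × Fin m) := ⟨(⟨0, by omega⟩, ⟨0, by omega⟩)⟩
  refine metricDim_eq_of_isResolving ⟨S.map .inr, by simpa using hcard, ?_⟩ fun _ => ?_
  · simpa using isResolving_corona_image_inr hG hres hshift
  · exact three_le_card_of_isResolving
      (corona_not_isResolving_pair hG (grid_twins_or_step hn hm))
end

section
/- For n ≥ 4 and m ≥ 2, the set S = {v₁ₘ, v₃₁, v₄₁, …, vₙ₁} of n − 1 vertices is a resolving set for (Kₙ × Pₘ) ⊙ K₁, where v_{ij} = (v_i, u_j) with v₁,…,vₙ the vertices of Kₙ and u₁,…,uₘ the vertices of Pₘ. -/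
open SimpleGraph

namespace CoronaAux

lemma adj_inl_inl {V : Type*} {G : SimpleGraph V} {x y : V} (h : G.Adj x y) :
    (corona G).Adj (Sum.inl x) (Sum.inl y) :=
  (SimpleGraph.fromRel_adj _ _ _).mpr ⟨by simp [h.ne], Or.inl h⟩

lemma adj_inr_inl {V : Type*} {G : SimpleGraph V} (x : V) :
    (corona G).Adj (Sum.inr x) (Sum.inl x) :=
  (SimpleGraph.fromRel_adj _ _ _).mpr ⟨by simp, Or.inr rfl⟩

variable {n m : ℕ}

/-- The box product `Kₙ □ Pₘ`. -/
abbrev G0 (n m : ℕ) : SimpleGraph (Fin n × Fin m) := (⊤ : SimpleGraph (Fin n)) □ pathGraph m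

/-- Distance formula in `Kₙ □ Pₘ`. -/
def d (x y : Fin n × Fin m) : ℕ :=
  (if x.1 = y.1 then 0 else 1) + ((x.2.val - y.2.val) + (y.2.val - x.2.val))

/-- Distance-to-`Sum.inl t` formula in the corona. -/
def D (t : Fin n × Fin m) : (Fin n × Fin m) ⊕ (Fin n × Fin m) → ℕ :=
  Sum.elim (fun x => d x t) (fun x => d x t + 1)

lemma d_lip {x y t : Fin n × Fin m} (h : (G0 n m).Adj x y) : d x t ≤ d y t + 1 := by
  rcases boxProd_adj.mp h with ⟨h1, h2⟩ | ⟨h1, h2⟩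
  · simp only [d]
    rw [h2]
    split_ifs <;> omega
  · rcases pathGraph_adj.mp h1 with h3 | h3 <;>
    · simp only [d]
      rw [h2]
      split_ifs <;> omega

lemma lip (t : Fin n × Fin m) {a b : (Fin n × Fin m) ⊕ (Fin n × Fin m)}
    (h : (corona (G0 n m)).Adj a b) : D t a ≤ D t b + 1 := by
  simp only [corona, SimpleGraph.fromRel_adj] at h
  obtain ⟨hne, hrel⟩ := h
  cases a with
  | inl x =>
    cases b with
    | inl y =>
      simp only [D, Sum.elim_inl]
      rcases hrel with h | h
      · exact d_lip h
      · exact d_lip h.symm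
    | inr y =>
      rcases hrel with h | h
      · subst h; simp only [D, Sum.elim_inl, Sum.elim_inr]; omega
      · exact h.elim
  | inr x =>
    cases b with
    | inl y =>
      rcases hrel with h | h
      · exact h.elim
      · subst h; simp only [D, Sum.elim_inl, Sum.elim_inr]; omega
    | inr y =>
      rcases hrel with h | h <;> exact h.elim

lemma D_le_length (t : Fin n × Fin m) {a b : (Fin n × Fin m) ⊕ (Fin n × Fin m)}
    (p : (corona (G0 n m)).Walk a b) (hb : b = Sum.inl t) : D t a ≤ p.length := by
  induction p with
  | nil => subst hb; simp [D, d]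
  | cons h p ih =>
    rw [SimpleGraph.Walk.length_cons]
    have h1 := lip t h
    have h2 := ih hb
    omega

lemma walk_fiber (i : Fin n) : ∀ (k : ℕ) (j j' : Fin m), j.val + k = j'.val →
    ∃ p : (corona (G0 n m)).Walk (Sum.inl (i, j)) (Sum.inl (i, j')), p.length = k := by
  intro k
  induction k with
  | zero =>
    intro j j' h
    have : j = j' := Fin.ext (by omega)
    subst this
    exact ⟨SimpleGraph.Walk.nil, rfl⟩
  | succ k ih =>
    intro j j' h
    have hj1 : j.val + 1 < m := by omega
    set j1 : Fin m := ⟨j.val + 1, hj1⟩ with hj1def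
    have hadj : (corona (G0 n m)).Adj (Sum.inl (i, j)) (Sum.inl (i, j1)) :=
      adj_inl_inl (boxProd_adj.mpr (Or.inr ⟨pathGraph_adj.mpr (Or.inl rfl), rfl⟩))
    obtain ⟨p, hp⟩ := ih j1 j' (by simp [hj1def]; omega)
    exact ⟨SimpleGraph.Walk.cons hadj p, by simp [hp]⟩

lemma walk_fiber' (i : Fin n) (j j' : Fin m) :
    ∃ p : (corona (G0 n m)).Walk (Sum.inl (i, j)) (Sum.inl (i, j')),
      p.length = (j.val - j'.val) + (j'.val - j.val) := by
  rcases le_total j.val j'.val with hle | hle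
  · obtain ⟨p, hp⟩ := walk_fiber i (j'.val - j.val) j j' (by omega)
    exact ⟨p, by omega⟩
  · obtain ⟨p, hp⟩ := walk_fiber i (j.val - j'.val) j' j (by omega)
    exact ⟨p.reverse, by simpa using by omega⟩

lemma walk_d (x t : Fin n × Fin m) :
    ∃ p : (corona (G0 n m)).Walk (Sum.inl x) (Sum.inl t), p.length = d x t := by
  obtain ⟨i, j⟩ := x
  obtain ⟨a, b⟩ := t
  by_cases hx : i = a
  · subst hx
    obtain ⟨p, hp⟩ := walk_fiber' i j b
    exact ⟨p, by simp [d, hp]⟩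
  · have hadj : (corona (G0 n m)).Adj (Sum.inl (i, j)) (Sum.inl (a, j)) :=
      adj_inl_inl (boxProd_adj.mpr (Or.inl ⟨hx, rfl⟩))
    obtain ⟨p, hp⟩ := walk_fiber' a j b
    refine ⟨SimpleGraph.Walk.cons hadj p, ?_⟩
    simp [d, hp, hx]
    omega

lemma dist_inl (x t : Fin n × Fin m) :
    (corona (G0 n m)).dist (Sum.inl x) (Sum.inl t) = d x t := by
  obtain ⟨p, hp⟩ := walk_d x t
  refine le_antisymm (hp ▸ SimpleGraph.dist_le p) ?_
  obtain ⟨q, hq⟩ := (SimpleGraph.Walk.reachable p).exists_walk_length_eq_dist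
  rw [← hq]
  exact D_le_length t q rfl

lemma dist_inr (x t : Fin n × Fin m) :
    (corona (G0 n m)).dist (Sum.inr x) (Sum.inl t) = d x t + 1 := by
  obtain ⟨p, hp⟩ := walk_d x t
  have hw : ∃ q : (corona (G0 n m)).Walk (Sum.inr x) (Sum.inl t), q.length = d x t + 1 :=
    ⟨SimpleGraph.Walk.cons (adj_inr_inl x) p, by simp [hp]⟩
  obtain ⟨q, hq⟩ := hw
  refine le_antisymm (hq ▸ SimpleGraph.dist_le q) ?_
  obtain ⟨r, hr⟩ := (SimpleGraph.Walk.reachable q).exists_walk_length_eq_dist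
  rw [← hr]
  exact D_le_length t r rfl

set_option maxHeartbeats 2000000 in
lemma key_nat (n m : ℕ) (hn : 4 ≤ n) (hm : 2 ≤ m) {i i' j j' e e' : ℕ}
    (hi : i < n) (hi' : i' < n) (hj : j < m) (hj' : j' < m) (he : e ≤ 1) (he' : e' ≤ 1)
    (E1 : (if i = 0 then 0 else 1) + ((j - (m - 1)) + ((m - 1) - j)) + e
        = (if i' = 0 then 0 else 1) + ((j' - (m - 1)) + ((m - 1) - j')) + e')
    (Ea : ∀ a, 2 ≤ a → a < n →
        (if i = a then 0 else 1) + ((j - 0) + (0 - j)) + e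
      = (if i' = a then 0 else 1) + ((j' - 0) + (0 - j')) + e') :
    i = i' ∧ j = j' ∧ e = e' := by
  have E2 := Ea 2 le_rfl (by omega)
  have E3 := Ea 3 (by omega) (by omega)
  rcases Nat.lt_or_ge i 2 with h2 | h2
  · rcases Nat.lt_or_ge i' 2 with h2' | h2'
    · split_ifs at E1 E2 E3 <;> omega
    · have Ei' := Ea i' h2' hi'
      simp only [if_pos rfl] at Ei'
      split_ifs at E1 E2 E3 Ei' <;> omega
  · have Ei := Ea i h2 hi
    simp only [if_pos rfl] at Ei
    rcases Nat.lt_or_ge i' 2 with h2' | h2'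
    · split_ifs at E1 E2 E3 Ei <;> omega
    · have Ei' := Ea i' h2' hi'
      simp only [if_pos rfl] at Ei'
      split_ifs at E1 E2 E3 Ei Ei' <;> omega

end CoronaAux

open CoronaAux

theorem stmt_7 (n m : ℕ) (hn : 4 ≤ n) (hm : 2 ≤ m)
    (S : Finset ((Fin n × Fin m) ⊕ (Fin n × Fin m)))
    (hS : S = insert (Sum.inl ((⟨0, by omega⟩ : Fin n), (⟨m - 1, by omega⟩ : Fin m)))
      ((Finset.univ.filter (fun i : Fin n => 2 ≤ i.val)).image
        (fun i => Sum.inl (i, (⟨0, by omega⟩ : Fin m))))) :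
    S.card = n - 1 ∧
      IsResolving (corona ((⊤ : SimpleGraph (Fin n)) □ pathGraph m)) (↑S) := by
  subst hS
  constructor
  · -- cardinality
    rw [Finset.card_insert_of_notMem, Finset.card_image_of_injOn]
    · have himg : (Finset.univ.filter (fun i : Fin n => 2 ≤ i.val)).image Fin.val
          = Finset.Ico 2 n := by
        ext x
        simp only [Finset.mem_image, Finset.mem_filter, Finset.mem_univ, true_and,
          Finset.mem_Ico]
        constructor
        · rintro ⟨i, h2, rfl⟩; exact ⟨h2, i.isLt⟩
        · rintro ⟨h2, hx⟩; exact ⟨⟨x, hx⟩, h2, rfl⟩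
      have := Finset.card_image_of_injective
        (Finset.univ.filter (fun i : Fin n => 2 ≤ i.val)) Fin.val_injective
      rw [himg, Nat.card_Ico] at this
      omega
    · intro a _ b _ hab
      have := Sum.inl.inj hab
      exact (Prod.ext_iff.mp this).1
    · intro hmem
      simp only [Finset.mem_image, Finset.mem_filter, Finset.mem_univ, true_and,
        Sum.inl.injEq, Prod.ext_iff, Fin.ext_iff] at hmem
      obtain ⟨i, _, _, h0⟩ := hmem
      omega
  · -- resolving
    intro u v h
    have h1 := h (Sum.inl ((⟨0, by omega⟩ : Fin n), (⟨m - 1, by omega⟩ : Fin m)))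
      (Finset.mem_coe.mpr (Finset.mem_insert_self _ _))
    have ha : ∀ a : Fin n, 2 ≤ a.val →
        (corona ((⊤ : SimpleGraph (Fin n)) □ pathGraph m)).dist u
            (Sum.inl (a, (⟨0, by omega⟩ : Fin m)))
        = (corona ((⊤ : SimpleGraph (Fin n)) □ pathGraph m)).dist v
            (Sum.inl (a, (⟨0, by omega⟩ : Fin m))) := by
      intro a haa
      refine h _ (Finset.mem_coe.mpr (Finset.mem_insert_of_mem ?_))
      exact Finset.mem_image.mpr ⟨a, Finset.mem_filter.mpr ⟨Finset.mem_univ _, haa⟩, rfl⟩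
    clear h
    obtain (⟨i, j⟩ | ⟨i, j⟩) := u <;> obtain (⟨i', j'⟩ | ⟨i', j'⟩) := v
    · rw [dist_inl, dist_inl] at h1
      simp only [dist_inl] at ha
      have key := key_nat n m hn hm i.isLt i'.isLt j.isLt j'.isLt
        (le_refl 0 |>.trans (by omega) : (0:ℕ) ≤ 1) (by omega : (0:ℕ) ≤ 1)
        (by simpa [d, Fin.ext_iff] using h1)
        (fun a h2a han => by
          simpa [d, Fin.ext_iff] using ha ⟨a, han⟩ h2a)
      obtain ⟨hii, hjj, -⟩ := key
      exact congrArg Sum.inl (Prod.ext (Fin.ext hii) (Fin.ext hjj))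
    · rw [dist_inl, dist_inr] at h1
      simp only [dist_inl, dist_inr] at ha
      have key := key_nat n m hn hm i.isLt i'.isLt j.isLt j'.isLt
        (by omega : (0:ℕ) ≤ 1) (le_refl 1)
        (by simpa [d, Fin.ext_iff] using h1)
        (fun a h2a han => by
          simpa [d, Fin.ext_iff] using ha ⟨a, han⟩ h2a)
      omega
    · rw [dist_inr, dist_inl] at h1
      simp only [dist_inr, dist_inl] at ha
      have key := key_nat n m hn hm i.isLt i'.isLt j.isLt j'.isLt
        (le_refl 1) (by omega : (0:ℕ) ≤ 1)
        (by simpa [d, Fin.ext_iff] using h1)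
        (fun a h2a han => by
          simpa [d, Fin.ext_iff] using ha ⟨a, han⟩ h2a)
      omega
    · rw [dist_inr, dist_inr] at h1
      simp only [dist_inr] at ha
      have key := key_nat n m hn hm i.isLt i'.isLt j.isLt j'.isLt
        (le_refl 1) (le_refl 1)
        (by simpa [d, Fin.ext_iff] using h1)
        (fun a h2a han => by
          simpa [d, Fin.ext_iff] using ha ⟨a, han⟩ h2a)
      obtain ⟨hii, hjj, -⟩ := key
      exact congrArg Sum.inr (Prod.ext (Fin.ext hii) (Fin.ext hjj))
end

section
/- If G₁ is a graph obtained by adding a pendant edge to a nontrivial connected graph G, then dim(G) ≤ dim(G₁) ≤ dim(G) + 1. -/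
open SimpleGraph

/-- The graph obtained from `G` by adding a pendant vertex adjacent only to `w`. -/
def addPendant {V : Type*} (G : SimpleGraph V) (w : V) : SimpleGraph (V ⊕ Unit) :=
  SimpleGraph.fromRel (fun a b =>
    match a, b with
    | Sum.inl x, Sum.inl y => G.Adj x y
    | Sum.inl x, Sum.inr _ => x = w
    | _, _ => False)
/-! Adding a pendant vertex `p` at `w` does not change distances in `G`: the inclusion is a
homomorphism, and collapsing `p` onto `w` does not lengthen walks. Moreover `d(u, p) = d(u, w) + 1`.
So a resolving set of `G₁` becomes one of `G` after replacing `p` by `w`, and a resolving set of `G`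
together with `p` resolves `G₁`, as `p` is the only vertex at distance `0` from `p`. -/

section Distance

variable {V W : Type*} {G : SimpleGraph V} {H : SimpleGraph W} {f : W → V}

lemma exists_walk_length_le_of_adj_imp_eq_or_adj
    (hf : ∀ ⦃a b⦄, H.Adj a b → f a = f b ∨ G.Adj (f a) (f b)) {a b : W} (p : H.Walk a b) :
    ∃ q : G.Walk (f a) (f b), q.length ≤ p.length := by
  induction p with
  | nil => exact ⟨.nil, le_rfl⟩
  | cons hadj _ ih =>
    obtain ⟨q, hq⟩ := ih
    rcases hf hadj with heq | hadj'
    · exact ⟨q.copy heq.symm rfl, by simp only [Walk.length_copy, Walk.length_cons]; omega⟩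
    · exact ⟨.cons hadj' q, by simp only [Walk.length_cons]; omega⟩

lemma dist_le_of_adj_imp_eq_or_adj
    (hf : ∀ ⦃a b⦄, H.Adj a b → f a = f b ∨ G.Adj (f a) (f b)) {a b : W} (hab : H.Reachable a b) :
    G.dist (f a) (f b) ≤ H.dist a b := by
  obtain ⟨p, hp⟩ := hab.exists_walk_length_eq_dist
  obtain ⟨q, hq⟩ := exists_walk_length_le_of_adj_imp_eq_or_adj hf p
  exact (dist_le q).trans (hp ▸ hq)

end Distance

section MetricDimension

variable {V : Type*} {G : SimpleGraph V}

lemma isResolving_univ (hG : G.Connected) : IsResolving G Set.univ := fun u v h => by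
  simpa [hG.dist_eq_zero_iff] using h v trivial

variable [Fintype V]

lemma metricDim_le_card {S : Finset V} (hS : IsResolving G S) : metricDim G ≤ S.card :=
  Nat.sInf_le (m := S.card) ⟨S, rfl, hS⟩

lemma SimpleGraph.Connected.exists_isResolving_card_eq_metricDim (hG : G.Connected) :
    ∃ S : Finset V, S.card = metricDim G ∧ IsResolving G S :=
  Nat.sInf_mem (s := {k | ∃ S : Finset V, S.card = k ∧ IsResolving G S})
    ⟨_, Finset.univ, rfl, by simpa using isResolving_univ hG⟩

end MetricDimension

namespace addPendant

variable {V : Type*} {G : SimpleGraph V} {w : V}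

@[simp]
lemma adj_inl_inl {x y : V} : (addPendant G w).Adj (.inl x) (.inl y) ↔ G.Adj x y := by
  simpa [addPendant, G.adj_comm y x] using fun h : G.Adj x y => h.ne

@[simp]
lemma adj_inl_inr {x : V} {t : Unit} : (addPendant G w).Adj (.inl x) (.inr t) ↔ x = w := by
  simp [addPendant]

@[simp]
lemma adj_inr_inl {x : V} {t : Unit} : (addPendant G w).Adj (.inr t) (.inl x) ↔ x = w := by
  simp [addPendant]

@[simp]
lemma not_adj_inr_inr {s t : Unit} : ¬(addPendant G w).Adj (.inr s) (.inr t) := by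
  simp [addPendant]

def inlHom : G →g addPendant G w where
  toFun := Sum.inl
  map_rel' := adj_inl_inl.mpr

lemma adj_imp_eq_or_adj_elim ⦃a b : V ⊕ Unit⦄ (h : (addPendant G w).Adj a b) :
    Sum.elim id (fun _ => w) a = Sum.elim id (fun _ => w) b ∨
      G.Adj (Sum.elim id (fun _ => w) a) (Sum.elim id (fun _ => w) b) := by
  rcases a with x | ⟨⟩ <;> rcases b with y | ⟨⟩ <;> simp_all

variable (hG : G.Connected)
include hG

lemma connected : (addPendant G w).Connected := by
  have hreach : ∀ u, (addPendant G w).Reachable (.inl u) (.inr ()) := fun u =>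
    ((hG.preconnected u w).map inlHom).trans (adj_inl_inr.mpr rfl).reachable
  refine ⟨?_⟩
  rintro (u | ⟨⟩) (v | ⟨⟩)
  · exact (hG.preconnected u v).map inlHom
  · exact hreach u
  · exact (hreach v).symm
  · rfl

@[simp]
lemma dist_inl_inl (u v : V) : (addPendant G w).dist (.inl u) (.inl v) = G.dist u v :=
  le_antisymm
    (dist_le_of_adj_imp_eq_or_adj (fun _ _ h => Or.inr (inlHom.map_adj h)) (hG.preconnected u v))
    (dist_le_of_adj_imp_eq_or_adj adj_imp_eq_or_adj_elim
      ((connected hG).preconnected (.inl u) (.inl v)))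

/-- Every walk into the pendant vertex enters it through `w`. -/
@[simp]
lemma dist_inl_inr (u : V) : (addPendant G w).dist (.inl u) (.inr ()) = G.dist u w + 1 := by
  have hw : (addPendant G w).Adj (.inl w) (.inr ()) := adj_inl_inr.mpr rfl
  refine le_antisymm ?_ ?_
  · calc (addPendant G w).dist (.inl u) (.inr ())
        ≤ (addPendant G w).dist (.inl u) (.inl w) + (addPendant G w).dist (.inl w) (.inr ()) :=
          (connected hG).dist_triangle
      _ = G.dist u w + 1 := by rw [dist_inl_inl hG, dist_eq_one_iff_adj.mpr hw]
  · obtain ⟨p, hp⟩ :=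
      ((connected hG (w := w)).preconnected (.inr ()) (.inl u)).exists_walk_length_eq_dist
    rw [(addPendant G w).dist_comm, ← hp]
    cases p with
    | cons h q =>
      rename_i b
      obtain ⟨x, rfl⟩ : ∃ x, b = .inl x := by
        rcases b with x | ⟨⟩
        · exact ⟨x, rfl⟩
        · exact absurd h not_adj_inr_inr
      obtain rfl : x = w := adj_inr_inl.mp h
      obtain ⟨q', hq'⟩ := exists_walk_length_le_of_adj_imp_eq_or_adj adj_imp_eq_or_adj_elim q
      rw [G.dist_comm, Walk.length_cons]
      exact Nat.succ_le_succ ((dist_le q').trans hq')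

lemma isResolving_image_elim {T : Set (V ⊕ Unit)} (hT : IsResolving (addPendant G w) T) :
    IsResolving G (Sum.elim id (fun _ => w) '' T) := fun u v h =>
  Sum.inl_injective <| hT _ _ <| by
    rintro (x | ⟨⟩) hx
    · simpa [dist_inl_inl hG] using h x ⟨_, hx, rfl⟩
    · simpa [dist_inl_inr hG] using h w ⟨_, hx, rfl⟩

lemma isResolving_insert_inr_image_inl {S : Set V} (hS : IsResolving G S) :
    IsResolving (addPendant G w) (insert (.inr ()) (Sum.inl '' S)) := by
  intro a b h
  have hinr := h (.inr ()) (Set.mem_insert _ _)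
  rcases a with x | ⟨⟩ <;> rcases b with y | ⟨⟩
  · refine congrArg Sum.inl (hS x y fun s hs => ?_)
    simpa [dist_inl_inl hG] using h (.inl s) (Set.mem_insert_of_mem _ ⟨s, hs, rfl⟩)
  · simp [dist_inl_inr hG] at hinr
  · simp [dist_inl_inr hG] at hinr
  · rfl

end addPendant

theorem stmt_8_general {V : Type*} [Fintype V] (G : SimpleGraph V)
    (hG : G.Connected) (w : V) :
    metricDim G ≤ metricDim (addPendant G w) ∧
      metricDim (addPendant G w) ≤ metricDim G + 1 := by
  classical
  obtain ⟨S, hScard, hS⟩ := hG.exists_isResolving_card_eq_metricDim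
  obtain ⟨T, hTcard, hT⟩ := (addPendant.connected hG (w := w)).exists_isResolving_card_eq_metricDim
  constructor
  · calc metricDim G ≤ (T.image (Sum.elim id fun _ => w)).card :=
          metricDim_le_card (by simpa using addPendant.isResolving_image_elim hG hT)
      _ ≤ T.card := Finset.card_image_le
      _ = metricDim (addPendant G w) := hTcard
  · calc metricDim (addPendant G w) ≤ (insert (.inr ()) (S.image Sum.inl)).card :=
          metricDim_le_card (by simpa using addPendant.isResolving_insert_inr_image_inl hG hS)
      _ ≤ (S.image Sum.inl).card + 1 := Finset.card_insert_le _ _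
      _ = metricDim G + 1 := by rw [Finset.card_image_of_injective _ Sum.inl_injective, hScard]

theorem stmt_8 {V : Type*} [Fintype V] [Nontrivial V] (G : SimpleGraph V)
    (hG : G.Connected) (w : V) :
    metricDim G ≤ metricDim (addPendant G w) ∧
      metricDim (addPendant G w) ≤ metricDim G + 1 :=
  stmt_8_general G hG w
end
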